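/- arXiv:2311.06001 — 6 statements merged into one kernel-verified Lean document; each statement's English description precedes it below -/
import Mathlib

section
/- Let f, g ∈ k[t] with f nonconstant. The subspace L(f,g) = k[f]·g·∂ = {p(f)g∂ : p ∈ k[t]} is a Lie subalgebra of W_1 if and only if f'g ∈ k[f] (i.e., f'g = h(f) for some h ∈ k[t]). -/
open Polynomial

/-- The Witt bracket on `k[t]`: `[f∂, g∂] = (f g' - f' g)∂`. -/
noncomputable def wittBr {k : Type*} [Field k] (f g : k[X]) : k[X] :=
  f * derivative g - derivative f * g

lemma wittBr_key {k : Type*} [Field k] (f g p q : k[X]) :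
    wittBr (p.comp f * g) (q.comp f * g) =
      ((p * derivative q - derivative p * q).comp f) * (derivative f * g) * g := by
  simp only [wittBr, derivative_mul, derivative_comp, sub_comp, mul_comp]
  ring

/-- For `f` nonconstant, `L(f,g) = k[f]·g·∂` is a Lie subalgebra of `W_1` if and
only if `f'g ∈ k[f]`. -/
theorem stmt2 (k : Type*) [Field k] [CharZero k] (f g : k[X]) (hf : 1 ≤ f.natDegree) :
    (∀ p q : k[X], ∃ r : k[X], wittBr (p.comp f * g) (q.comp f * g) = r.comp f * g) ↔
      ∃ h : k[X], derivative f * g = h.comp f := by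
  constructor
  · intro H
    rcases eq_or_ne g 0 with hg | hg
    · exact ⟨0, by simp [hg]⟩
    obtain ⟨r, hr⟩ := H 1 X
    rw [wittBr_key] at hr
    refine ⟨r, mul_right_cancel₀ hg ?_⟩
    simpa using hr
  · rintro ⟨h, hh⟩ p q
    refine ⟨(p * derivative q - derivative p * q) * h, ?_⟩
    rw [wittBr_key, hh, mul_comp]
end

section
/- Let f ∈ k[t] be nonconstant, let g_f be a monic polynomial of minimal degree with f'g_f ∈ k[f], and suppose g ∈ k[t] satisfies f'g ∈ k[f]. Then g_f divides g in the sense that g = p(f)·g_f for some p ∈ k[t]; consequently k[f]·g·∂ ⊆ k[f]·g_f·∂. -/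
/-!
Comparing degrees in `f' g = h(f)` shows `deg g ≡ 1 (mod deg f)` for every nonzero `g` with
`f' g ∈ k[f]`, so by minimality `deg g = deg g_f + j deg f` for some `j ≥ 0`. These `g` form a
`k[f]`-module, so subtracting `c f^j g_f` kills the leading term of `g` without leaving the
module, and induction on the degree writes `g` as `p(f) g_f`.
-/

open Polynomial

namespace Polynomial

variable {k : Type*} [Field k]

/-- `f' g ∈ k[f]`, i.e. the derivation `g ∂` maps `k[f]` into itself, as
`(g ∂)(p(f)) = p'(f) f' g`. -/
def DerivPreserves (f g : k[X]) : Prop :=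
  ∃ h : k[X], derivative f * g = h.comp f

namespace DerivPreserves

variable {f g g' : k[X]}

theorem comp_mul (p : k[X]) (hg : DerivPreserves f g) : DerivPreserves f (p.comp f * g) := by
  obtain ⟨h, hh⟩ := hg
  exact ⟨p * h, by rw [mul_comp, ← hh]; ring⟩

theorem sub (hg : DerivPreserves f g) (hg' : DerivPreserves f g') :
    DerivPreserves f (g - g') := by
  obtain ⟨h, hh⟩ := hg
  obtain ⟨h', hh'⟩ := hg'
  exact ⟨h - h', by rw [sub_comp, ← hh, ← hh', mul_sub]⟩

theorem natDegree_dvd [CharZero k] (hf : 1 ≤ f.natDegree) (hg0 : g ≠ 0)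
    (hg : DerivPreserves f g) : f.natDegree ∣ f.natDegree - 1 + g.natDegree := by
  obtain ⟨h, hh⟩ := hg
  have hf' : derivative f ≠ 0 := by simpa using (Nat.one_le_iff_ne_zero.mp hf)
  have := congrArg natDegree hh
  rw [natDegree_mul hf' hg0, natDegree_comp, natDegree_derivative] at this
  exact Dvd.intro_left _ this.symm

theorem natDegree_le_of_minimal {gf : k[X]}
    (hmin : ∀ g' : k[X], g'.Monic → DerivPreserves f g' → gf.natDegree ≤ g'.natDegree)
    (hg0 : g ≠ 0) (hg : DerivPreserves f g) : gf.natDegree ≤ g.natDegree := by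
  have hmonic := monic_mul_leadingCoeff_inv hg0
  have := hmin _ hmonic (by simpa [mul_comm] using hg.comp_mul (C g.leadingCoeff⁻¹))
  rwa [natDegree_mul_C (inv_ne_zero (leadingCoeff_ne_zero.mpr hg0))] at this

theorem exists_natDegree_eq_add_mul [CharZero k] (hf : 1 ≤ f.natDegree)
    (hg0 : g ≠ 0) (hg : DerivPreserves f g) (hg'0 : g' ≠ 0) (hg' : DerivPreserves f g')
    (hle : g'.natDegree ≤ g.natDegree) :
    ∃ j, g.natDegree = g'.natDegree + f.natDegree * j := by
  have hdvd := Nat.dvd_sub (hg.natDegree_dvd hf hg0) (hg'.natDegree_dvd hf hg'0)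
  rw [show f.natDegree - 1 + g.natDegree - (f.natDegree - 1 + g'.natDegree)
    = g.natDegree - g'.natDegree by omega] at hdvd
  obtain ⟨j, hj⟩ := hdvd
  exact ⟨j, by omega⟩

end DerivPreserves

theorem natDegree_monomial_comp_mul {f gf : k[X]} (hf : f ≠ 0) (hgf : gf ≠ 0) {c : k}
    (hc : c ≠ 0) (j : ℕ) :
    ((C c * X ^ j).comp f * gf).natDegree = gf.natDegree + f.natDegree * j := by
  rw [mul_comp, C_comp, X_pow_comp, natDegree_mul (by simp [hc, hf]) hgf,
    natDegree_C_mul hc, natDegree_pow]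
  ring

theorem leadingCoeff_monomial_comp_mul (f gf : k[X]) (c : k) (j : ℕ) :
    ((C c * X ^ j).comp f * gf).leadingCoeff = c * f.leadingCoeff ^ j * gf.leadingCoeff := by
  simp

theorem DerivPreserves.exists_eq_comp_mul [CharZero k] {f gf : k[X]} (hf : 1 ≤ f.natDegree)
    (hmonic : gf.Monic) (hgf : DerivPreserves f gf)
    (hmin : ∀ g' : k[X], g'.Monic → DerivPreserves f g' → gf.natDegree ≤ g'.natDegree)
    (g : k[X]) (hg : DerivPreserves f g) : ∃ p : k[X], g = p.comp f * gf := by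
  induction g using degree_lt_wf.induction with
  | _ g ih =>
    rcases eq_or_ne g 0 with rfl | hg0
    · exact ⟨0, by simp⟩
    have hf0 : f ≠ 0 := by rintro rfl; simp at hf
    obtain ⟨j, hj⟩ := hg.exists_natDegree_eq_add_mul hf hg0 hmonic.ne_zero hgf
      (hg.natDegree_le_of_minimal hmin hg0)
    have hlcf : f.leadingCoeff ^ j ≠ 0 := pow_ne_zero _ (leadingCoeff_ne_zero.mpr hf0)
    set c := g.leadingCoeff / f.leadingCoeff ^ j
    set m := (C c * X ^ j).comp f * gf with hm
    have hlc : m.leadingCoeff = g.leadingCoeff := by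
      rw [hm, leadingCoeff_monomial_comp_mul, hmonic.leadingCoeff, mul_one,
        div_mul_cancel₀ _ hlcf]
    have hc : c ≠ 0 := div_ne_zero (leadingCoeff_ne_zero.mpr hg0) hlcf
    have hm0 : m ≠ 0 := leadingCoeff_ne_zero.mp (hlc ▸ leadingCoeff_ne_zero.mpr hg0)
    have hdeg : g.degree = m.degree := by
      rw [degree_eq_natDegree hg0, degree_eq_natDegree hm0, hm,
        natDegree_monomial_comp_mul hf0 hmonic.ne_zero hc, hj]
    obtain ⟨p, hp⟩ := ih _ (degree_sub_lt_left hdeg hg0 hlc.symm) (hg.sub (hgf.comp_mul _))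
    exact ⟨p + C c * X ^ j, by rw [add_comp, add_mul, ← hp, sub_add_cancel]⟩

end Polynomial

/-- If `g_f` is a monic polynomial of minimal degree with `f'g_f ∈ k[f]` and `g`
satisfies `f'g ∈ k[f]`, then `g = p(f)·g_f` for some `p`, and consequently
`k[f]·g·∂ ⊆ k[f]·g_f·∂`. -/
theorem stmt4 (k : Type*) [Field k] [CharZero k] (f gf g : k[X])
    (hf : 1 ≤ f.natDegree) (hmonic : gf.Monic)
    (hgf : ∃ h : k[X], derivative f * gf = h.comp f)
    (hmin : ∀ g' : k[X], g'.Monic → (∃ h : k[X], derivative f * g' = h.comp f) →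
      gf.natDegree ≤ g'.natDegree)
    (hg : ∃ h : k[X], derivative f * g = h.comp f) :
    (∃ p : k[X], g = p.comp f * gf) ∧
      ∀ q : k[X], ∃ r : k[X], q.comp f * g = r.comp f * gf := by
  obtain ⟨p, rfl⟩ := DerivPreserves.exists_eq_comp_mul hf hmonic hgf hmin g hg
  exact ⟨⟨p, rfl⟩, fun q => ⟨q * p, by rw [mul_comp, mul_assoc]⟩⟩
end

section
/- Let f ∈ k[t] be nonconstant. Then L(f) = W_1 ∩ W[f], where the intersection is taken inside k(t)∂: that is, if g ∈ k[t] and g∂ = (1/f')·h(f)·∂ for some h ∈ k[t], then g∂ ∈ L(f) = k[f]·g_f·∂, and conversely every element of L(f) has this form. -/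
open Polynomial

/-- `L(f) = W_1 ∩ W[f]` inside `k(t)∂`: for `g ∈ k[t]`, one has
`g∂ = (1/f')·h(f)·∂` for some `h ∈ k[t]` (i.e. `f'·g = h(f)`) if and only if
`g ∈ k[f]·g_f`, where `g_f` is the monic polynomial of minimal degree with
`f'·g_f ∈ k[f]`. -/
theorem stmt5 (k : Type*) [Field k] [CharZero k] (f gf g : k[X])
    (hf : 1 ≤ f.natDegree) (hmonic : gf.Monic)
    (hgf : ∃ h : k[X], derivative f * gf = h.comp f)
    (hmin : ∀ g' : k[X], g'.Monic → (∃ h : k[X], derivative f * g' = h.comp f) →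
      gf.natDegree ≤ g'.natDegree) :
    (∃ h : k[X], derivative f * g = h.comp f) ↔ ∃ p : k[X], g = p.comp f * gf := by
  have hfne : f ≠ 0 := fun h => by rw [h] at hf; simp at hf
  set n := f.natDegree with hn
  have hn0 : n ≠ 0 := by omega
  have ha : f.leadingCoeff ≠ 0 := leadingCoeff_ne_zero.mpr hfne
  have hd'coeff : (derivative f).coeff (n - 1) = f.leadingCoeff * n := by
    have h1 : n - 1 + 1 = n := by omega
    rw [coeff_derivative, h1, hn, coeff_natDegree, ← hn]
    congr 1
    push_cast [Nat.cast_sub (show 1 ≤ n by omega)]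
    ring
  have hd'ne : derivative f ≠ 0 := by
    intro h
    have := natDegree_eq_zero_of_derivative_eq_zero h
    omega
  have hd'deg : (derivative f).natDegree = n - 1 := by
    refine le_antisymm (natDegree_derivative_le f) (le_natDegree_of_ne_zero ?_)
    rw [hd'coeff]
    exact mul_ne_zero ha (by exact_mod_cast hn0)
  -- key degree identity
  have key : ∀ (g h : k[X]), g ≠ 0 → derivative f * g = h.comp f →
      (n - 1) + g.natDegree = h.natDegree * n := by
    intro g h hg hh
    have hhne : h ≠ 0 := by
      intro h0
      rw [h0, zero_comp] at hh
      exact mul_ne_zero hd'ne hg hh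
    have := congrArg natDegree hh
    rwa [natDegree_mul hd'ne hg, natDegree_comp, hd'deg] at this
  -- minimality for arbitrary nonzero g
  have hdle : ∀ (g h : k[X]), g ≠ 0 → derivative f * g = h.comp f →
      gf.natDegree ≤ g.natDegree := by
    intro g h hg hh
    have hc : g.leadingCoeff ≠ 0 := leadingCoeff_ne_zero.mpr hg
    have := hmin (g * C g.leadingCoeff⁻¹) (monic_mul_leadingCoeff_inv hg)
      ⟨h * C g.leadingCoeff⁻¹, by rw [mul_comp, C_comp, ← mul_assoc, hh]⟩
    rwa [natDegree_mul_C (inv_ne_zero hc)] at this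
  obtain ⟨hgf0, hhgf0⟩ := hgf
  have hgfne : gf ≠ 0 := hmonic.ne_zero
  have e2 : (n - 1) + gf.natDegree = hgf0.natDegree * n := key gf hgf0 hgfne hhgf0
  -- main induction
  have main : ∀ (N : ℕ) (g : k[X]), g.natDegree < N →
      (∃ h : k[X], derivative f * g = h.comp f) → ∃ p : k[X], g = p.comp f * gf := by
    intro N
    induction N with
    | zero => intro g hgN; omega
    | succ N IH =>
      rintro g hgN ⟨h, hh⟩
      by_cases hg0 : g = 0
      · exact ⟨0, by simp [hg0]⟩
      have hc : g.leadingCoeff ≠ 0 := leadingCoeff_ne_zero.mpr hg0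
      have e1 : (n - 1) + g.natDegree = h.natDegree * n := key g h hg0 hh
      have hdlem : gf.natDegree ≤ g.natDegree := hdle g h hg0 hh
      have hjle : hgf0.natDegree ≤ h.natDegree := by
        have : hgf0.natDegree * n ≤ h.natDegree * n := by omega
        exact Nat.le_of_mul_le_mul_right this (by omega)
      set j := h.natDegree - hgf0.natDegree with hj
      set J := j * n with hJ
      have hm : g.natDegree = gf.natDegree + J := by
        have e1' : (n - 1) + g.natDegree = ((n - 1) + gf.natDegree) + J := by
          rw [e1, e2, hJ, hj, ← add_mul]
          congr 2
          omega
        omega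
      set q : k[X] := C (g.leadingCoeff * (f.leadingCoeff ^ j)⁻¹) * X ^ j with hq
      have hcoefne : g.leadingCoeff * (f.leadingCoeff ^ j)⁻¹ ≠ 0 :=
        mul_ne_zero hc (inv_ne_zero (pow_ne_zero _ ha))
      have hqcomp : q.comp f = C (g.leadingCoeff * (f.leadingCoeff ^ j)⁻¹) * f ^ j := by
        rw [hq, mul_comp, C_comp, pow_comp, X_comp]
      set t := q.comp f * gf with ht
      have htne : t ≠ 0 := by
        rw [ht, hqcomp]
        exact mul_ne_zero (mul_ne_zero (by simpa using hcoefne) (pow_ne_zero _ hfne)) hgfne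
      have htdeg : t.natDegree = g.natDegree := by
        rw [ht, hqcomp, natDegree_mul (mul_ne_zero (by simpa using hcoefne)
          (pow_ne_zero _ hfne)) hgfne,
          natDegree_mul (by simpa using hcoefne) (pow_ne_zero _ hfne),
          natDegree_C, natDegree_pow, hm]
        ring
      have htlc : t.leadingCoeff = g.leadingCoeff := by
        rw [ht, hqcomp, leadingCoeff_mul, leadingCoeff_mul, leadingCoeff_C,
          leadingCoeff_pow, hmonic.leadingCoeff]
        field_simp
      have hprop' : derivative f * (g - t) = (h - q * hgf0).comp f := by
        rw [sub_comp, mul_comp, ← hhgf0, mul_sub, hh, ht]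
        ring
      by_cases hg' : g - t = 0
      · exact ⟨q, by rw [← ht, ← sub_eq_zero, ← hg']⟩
      have hdlt : (g - t).natDegree < N := by
        have hdd : degree (g - t) < degree g := by
          refine degree_sub_lt ?_ hg0 htlc.symm
          rw [degree_eq_natDegree hg0, degree_eq_natDegree htne, htdeg]
        have := natDegree_lt_natDegree hg' hdd
        omega
      obtain ⟨p', hp'⟩ := IH (g - t) hdlt ⟨_, hprop'⟩
      refine ⟨p' + q, ?_⟩
      have : g = (g - t) + t := by ring
      rw [this, hp', add_comp, ht, add_mul]
  constructor
  · intro hex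
    exact main (g.natDegree + 1) g (Nat.lt_succ_self _) hex
  · rintro ⟨p, hp⟩
    exact ⟨p * hgf0, by rw [hp, mul_comp, ← hhgf0]; ring⟩
end

section
/- Let g ∈ k[t] be a monic polynomial of degree d ≥ 1. Then there exists a formal Laurent series s ∈ k((t^{-1})) of the form s = t + (terms of degree ≤ 0) such that s^d / s' = g, i.e., g∂ = s^d ∂_s where ∂_s = (1/s')∂. -/
/-!
Write `u = t⁻¹` and look for `s = t · w(u)` with `w ∈ k⟦u⟧`, `w(0) = 1`. Since `d/dt = -u² d/du`,
`s' = w - u w'`, and `g(t) = t^d ĝ(u)` with `ĝ = g.reverse`, `ĝ(0) = 1`; so the equation becomes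
`w^d = ĝ · (w - u w')` in `k⟦u⟧`. Changing the coefficient `w_n` (`n ≥ 1`) by `a` changes the
`n`-th coefficient of `ĝ · (w - u w') - w^d` by `-(n + d - 1) a` and no lower one, and
`n + d - 1 ≠ 0` in characteristic zero, so the coefficients of `w` can be solved for one at a time.
-/

open Polynomial

/-- The formal derivative `d/du` on `k((u))` (we think of `u = t⁻¹`). -/
noncomputable def laurentDeriv {k : Type*} [Field k] (F : LaurentSeries k) :
    LaurentSeries k where
  coeff n := ((n + 1 : ℤ) : k) * F.coeff (n + 1)
  isPWO_support' := by
    have hsub : (Function.support fun n : ℤ => ((n + 1 : ℤ) : k) * F.coeff (n + 1)) ⊆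
        (fun n : ℤ => n - 1) '' F.support := by
      intro n hn
      have : F.coeff (n + 1) ≠ 0 := by
        intro h
        simp [Function.mem_support, h] at hn
      exact ⟨n + 1, this, by ring⟩
    exact (F.isPWO_support.image_of_monotone (fun a b hab => by omega)).mono hsub

/-- `t = u⁻¹` as a Laurent series in `u = t⁻¹`. -/
noncomputable def tVar (k : Type*) [Field k] : LaurentSeries k :=
  HahnSeries.single (-1 : ℤ) 1

/-- The derivative `d/dt = -u² · d/du` on `k((t⁻¹))`. -/
noncomputable def tDeriv {k : Type*} [Field k] (F : LaurentSeries k) : LaurentSeries k :=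
  -(HahnSeries.single (2 : ℤ) (1 : k)) * laurentDeriv F

namespace PowerSeries

variable {R : Type*}

theorem exists_eq_zero_of_triangular [Field R] (Φ : R⟦X⟧ → R⟦X⟧) (c : ℕ → R) (f₀ : R⟦X⟧)
    (hc : ∀ n, c n ≠ 0) (hΦ : ∀ n f g, X ^ n ∣ f - g → X ^ n ∣ Φ f - Φ g)
    (hdiag : ∀ n f a, constantCoeff f = constantCoeff f₀ →
      coeff (n + 1) (Φ (f + C a * X ^ (n + 1))) = coeff (n + 1) (Φ f) + c n * a)
    (h₀ : constantCoeff (Φ f₀) = 0) :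
    ∃ f, constantCoeff f = constantCoeff f₀ ∧ Φ f = 0 := by
  let approx : ℕ → R⟦X⟧ := fun n => Nat.rec f₀
    (fun m fm => fm + C (-coeff (m + 1) (Φ fm) / c m) * X ^ (m + 1)) n
  have approx_zero : approx 0 = f₀ := rfl
  have approx_succ (n : ℕ) : approx (n + 1) =
      approx n + C (-coeff (n + 1) (Φ (approx n)) / c n) * X ^ (n + 1) := rfl
  have approx_sub (n m : ℕ) (hnm : n ≤ m) : X ^ (n + 1) ∣ approx m - approx n := by
    induction m, hnm using Nat.le_induction with
    | base => simp
    | succ m _ ih =>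
      rw [approx_succ, add_sub_right_comm]
      exact dvd_add ih (Dvd.dvd.mul_left (pow_dvd_pow X (by omega)) _)
  have approx_const (n : ℕ) : constantCoeff (approx n) = constantCoeff f₀ := by
    simpa [sub_eq_zero, X_dvd_iff, approx_zero] using approx_sub 0 n n.zero_le
  have approx_root (n : ℕ) : X ^ (n + 1) ∣ Φ (approx n) := by
    induction n with
    | zero => simpa [X_dvd_iff, approx_zero] using h₀
    | succ n ih =>
      have hlow : X ^ (n + 1) ∣ Φ (approx (n + 1)) := by
        simpa using dvd_add ih (hΦ _ _ _ (approx_sub n (n + 1) n.le_succ))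
      rw [X_pow_dvd_iff]
      intro m hm
      rcases Nat.lt_succ_iff_lt_or_eq.mp hm with hm | rfl
      · exact X_pow_dvd_iff.mp hlow m hm
      · rw [approx_succ, hdiag n _ _ (approx_const n)]
        field_simp [hc n]
        ring
  let f := mk fun n => coeff n (approx n)
  have f_sub (n : ℕ) : X ^ (n + 1) ∣ f - approx n := by
    refine X_pow_dvd_iff.mpr fun m hm => ?_
    have := X_pow_dvd_iff.mp (approx_sub m n (by omega)) m (by omega)
    simp only [map_sub, sub_eq_zero, coeff_mk, f] at this ⊢
    exact this.symm
  refine ⟨f, by simpa [sub_eq_zero, X_dvd_iff, approx_zero] using f_sub 0, ?_⟩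
  ext n
  have := dvd_add (approx_root n) (hΦ _ _ _ (f_sub n))
  simpa using X_pow_dvd_iff.mp this n n.lt_succ_self

theorem coeff_X_mul_derivative [CommSemiring R] (f : R⟦X⟧) (n : ℕ) :
    coeff n (X * d⁄dX R f) = n * coeff n f := by
  cases n with
  | zero => simp
  | succ n => rw [coeff_succ_X_mul, coeff_derivative, mul_comm]; push_cast; rfl

theorem X_pow_dvd_X_mul_derivative [CommSemiring R] {f : R⟦X⟧} {n : ℕ} (h : X ^ n ∣ f) :
    X ^ n ∣ X * d⁄dX R f :=
  X_pow_dvd_iff.mpr fun m hm => by rw [coeff_X_mul_derivative, X_pow_dvd_iff.mp h m hm, mul_zero]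

theorem sub_X_mul_derivative_C_mul_X_pow [CommRing R] (a : R) (n : ℕ) :
    C a * X ^ n - X * d⁄dX R (C a * X ^ n) = C ((1 - n) * a) * X ^ n := by
  ext m
  simp only [map_sub, coeff_X_mul_derivative, coeff_C_mul_X_pow]
  split_ifs with h
  · rw [h]; ring
  · ring

theorem coeff_mul_C_mul_X_pow [CommSemiring R] (f : R⟦X⟧) (a : R) (n : ℕ) :
    coeff n (f * (C a * X ^ n)) = constantCoeff f * a := by
  rw [← mul_assoc, coeff_mul_X_pow', if_pos le_rfl, Nat.sub_self,
    coeff_zero_eq_constantCoeff_apply, map_mul, constantCoeff_C]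

theorem coeff_add_C_mul_X_pow_pow [CommRing R] (f : R⟦X⟧) (a : R) (n d : ℕ) :
    coeff (n + 1) ((f + C a * X ^ (n + 1)) ^ d) =
      coeff (n + 1) (f ^ d) + d * constantCoeff f ^ (d - 1) * a := by
  obtain ⟨q, hq⟩ := (Polynomial.X ^ d : R⟦X⟧[X]).binomExpansion f (C a * X ^ (n + 1))
  simp only [eval_pow, eval_X, derivative_X_pow, eval_mul, eval_C] at hq
  have hsq : q * (C a * X ^ (n + 1)) ^ 2 = (q * C (a ^ 2) * X ^ n) * X ^ (n + 2) := by
    rw [map_pow]; ring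
  rw [hq, hsq, map_add, map_add, coeff_mul_C_mul_X_pow, coeff_mul_X_pow', if_neg (by omega),
    add_zero]
  simp

theorem exists_pow_eq_mul_sub_X_mul_derivative [Field R] [CharZero R] (P : R⟦X⟧)
    (hP : constantCoeff P = 1) {d : ℕ} (hd : 1 ≤ d) :
    ∃ w : R⟦X⟧, constantCoeff w = 1 ∧ w ^ d = P * (w - X * d⁄dX R w) := by
  set Φ : R⟦X⟧ → R⟦X⟧ := fun w => P * (w - X * d⁄dX R w) - w ^ d
  have hΦ (n : ℕ) (f g : R⟦X⟧) (h : X ^ n ∣ f - g) : X ^ n ∣ Φ f - Φ g := by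
    have hE : (f - X * d⁄dX R f) - (g - X * d⁄dX R g) = (f - g) - X * d⁄dX R (f - g) := by
      rw [map_sub]; ring
    rw [sub_sub_sub_comm, ← mul_sub, hE]
    exact dvd_sub (dvd_mul_of_dvd_right (dvd_sub h (X_pow_dvd_X_mul_derivative h)) _)
      (h.trans (sub_dvd_pow_sub_pow f g d))
  have hdiag (n : ℕ) (f : R⟦X⟧) (a : R) (hf : constantCoeff f = constantCoeff 1) :
      coeff (n + 1) (Φ (f + C a * X ^ (n + 1))) =
        coeff (n + 1) (Φ f) + -((n + d : ℕ) : R) * a := by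
    have hE : (f + C a * X ^ (n + 1)) - X * d⁄dX R (f + C a * X ^ (n + 1)) =
        (f - X * d⁄dX R f) + (C (-n * a) * X ^ (n + 1)) := by
      rw [map_add, mul_add, add_sub_add_comm, sub_X_mul_derivative_C_mul_X_pow]
      push_cast; ring_nf
    simp only [map_one] at hf
    simp only [Φ]
    rw [hE, mul_add, map_sub, map_sub, map_add, coeff_add_C_mul_X_pow_pow, hf,
      coeff_mul_C_mul_X_pow, hP]
    push_cast; ring
  obtain ⟨w, hw₀, hw⟩ := exists_eq_zero_of_triangular Φ (fun n => -((n + d : ℕ) : R)) 1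
    (fun n => neg_ne_zero.mpr (Nat.cast_ne_zero.mpr (by omega))) hΦ hdiag (by simp [Φ, hP])
  exact ⟨w, by simpa using hw₀, (sub_eq_zero.mp hw).symm⟩

end PowerSeries

open scoped PowerSeries

section

variable {k : Type*} [Field k]

theorem coeff_tVar_mul (F : LaurentSeries k) (n : ℤ) :
    (tVar k * F).coeff n = F.coeff (n + 1) := by
  rw [tVar, ← add_neg_cancel_right n 1, HahnSeries.coeff_single_mul_add, one_mul,
    neg_add_cancel_right]

theorem coeff_tDeriv (F : LaurentSeries k) (n : ℤ) :
    (tDeriv F).coeff n = -(((n - 1 : ℤ) : k) * F.coeff (n - 1)) := by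
  rw [tDeriv, neg_mul, HahnSeries.coeff_neg, ← sub_add_cancel n 2,
    HahnSeries.coeff_single_mul_add, one_mul]
  show -(((n - 2 + 1 : ℤ) : k) * F.coeff (n - 2 + 1)) = _
  ring_nf

theorem tDeriv_tVar_mul_ofPowerSeries (w : k⟦X⟧) :
    tDeriv (tVar k * HahnSeries.ofPowerSeries ℤ k w) =
      HahnSeries.ofPowerSeries ℤ k (w - PowerSeries.X * d⁄dX k w) := by
  ext n
  rw [coeff_tDeriv, coeff_tVar_mul, sub_add_cancel, PowerSeries.coeff_coe,
    PowerSeries.coeff_coe]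
  split_ifs with hn
  · simp
  · obtain ⟨m, rfl⟩ := Int.eq_ofNat_of_zero_le (not_lt.mp hn)
    rw [map_sub, PowerSeries.coeff_X_mul_derivative, Int.natAbs_natCast]
    push_cast; ring

theorem aeval_single_one_one_eq_ofPowerSeries (p : k[X]) :
    aeval (HahnSeries.single (1 : ℤ) (1 : k)) p = HahnSeries.ofPowerSeries ℤ k p := by
  induction p using Polynomial.induction_on' with
  | add p q hp hq => rw [map_add, hp, hq, Polynomial.coe_add, map_add]
  | monomial n a => simp [← C_mul_X_pow_eq_monomial, HahnSeries.algebraMap_apply']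

theorem aeval_tVar (g : k[X]) :
    aeval (tVar k) g = tVar k ^ g.natDegree * HahnSeries.ofPowerSeries ℤ k g.reverse := by
  let : Invertible (tVar k) :=
    ⟨HahnSeries.single 1 1, by simp [tVar], by simp [tVar]⟩
  rw [aeval_def, ← eval₂_reflect_mul_pow _ _ _ g le_rfl, mul_comm,
    ← aeval_single_one_one_eq_ofPowerSeries]
  -- `g.reverse` is `reflect g.natDegree g`, and `⅟ tVar k` is `single 1 1` by construction
  rfl

end

/-- For monic `g` of degree `d ≥ 1`, there is `s ∈ k((t⁻¹))` of the form
`s = t + (terms of degree ≤ 0)` with `s^d = g(t)·s'`, i.e. `g∂ = s^d ∂_s`. -/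
theorem stmt6 (k : Type*) [Field k] [CharZero k] (g : k[X])
    (hg : g.Monic) (hd : 1 ≤ g.natDegree) :
    ∃ s : LaurentSeries k,
      s.coeff (-1) = 1 ∧ (∀ n : ℤ, n < -1 → s.coeff n = 0) ∧
      s ^ g.natDegree = Polynomial.aeval (tVar k) g * tDeriv s := by
  obtain ⟨w, hw₀, hw⟩ := PowerSeries.exists_pow_eq_mul_sub_X_mul_derivative (g.reverse : k⟦X⟧)
    (by rw [← PowerSeries.coeff_zero_eq_constantCoeff_apply, Polynomial.coeff_coe,
      coeff_zero_reverse, hg.leadingCoeff]) hd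
  refine ⟨tVar k * HahnSeries.ofPowerSeries ℤ k w, ?_, fun n hn => ?_, ?_⟩
  · simp [coeff_tVar_mul, PowerSeries.coeff_coe, hw₀]
  · rw [coeff_tVar_mul, PowerSeries.coeff_coe, if_pos (by omega)]
  · rw [mul_pow, ← map_pow, hw, tDeriv_tVar_mul_ofPowerSeries, aeval_tVar, map_mul]
    ring
end

section
/- For n ≥ 1, consider W_n with ∂_k = ∂/∂x_k and k[x] = k[x_1,…,x_n]. For i ≥ 1 and j ∈ {0,…,n−1}, let L_{ij} = Σ_{k≤j} x_1^{i+1} k[x]∂_k + Σ_{k>j} x_1^i k[x]∂_k. Then [L_{ij}, L_{ij}] ⊆ L_{i,j+1}. -/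
open MvPolynomial

/-- `x₁ = X 0` in `k[x_1,…,x_n]`. -/
noncomputable def x1 (k : Type*) [CommRing k] {n : ℕ} (hn : 0 < n) :
    MvPolynomial (Fin n) k :=
  X (⟨0, hn⟩ : Fin n)

lemma dvd_D_all {k : Type*} [Field k] {n : ℕ} (hn : 0 < n)
    (D : Derivation k (MvPolynomial (Fin n) k) (MvPolynomial (Fin n) k))
    (a : ℕ) (hD : ∀ m : Fin n, x1 k hn ^ a ∣ D (X m)) (p : MvPolynomial (Fin n) k) :
    x1 k hn ^ a ∣ D p := by
  induction p using MvPolynomial.induction_on with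
  | C c =>
      rw [← MvPolynomial.algebraMap_eq, Derivation.map_algebraMap]
      exact dvd_zero _
  | add p q hp hq => rw [map_add]; exact dvd_add hp hq
  | mul_X p m hp =>
      rw [Derivation.leibniz, smul_eq_mul, smul_eq_mul]
      exact dvd_add ((hD m).mul_left p) (hp.mul_left _)

lemma keylem {k : Type*} [Field k] {n : ℕ} (hn : 0 < n)
    (D : Derivation k (MvPolynomial (Fin n) k) (MvPolynomial (Fin n) k))
    (a b e c : ℕ) (hall : ∀ p, x1 k hn ^ a ∣ D p) (hb : x1 k hn ^ b ∣ D (x1 k hn))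
    (he : 1 ≤ e) (hc1 : c ≤ e - 1 + b) (hc2 : c ≤ e + a)
    (p : MvPolynomial (Fin n) k) (hp : x1 k hn ^ e ∣ p) : x1 k hn ^ c ∣ D p := by
  obtain ⟨g, rfl⟩ := hp
  rw [Derivation.leibniz, Derivation.leibniz_pow, smul_eq_mul, smul_eq_mul,
    smul_eq_mul, nsmul_eq_mul]
  apply dvd_add
  · exact (pow_dvd_pow _ hc2).trans (by rw [pow_add]; exact mul_dvd_mul_left _ (hall g))
  · refine (pow_dvd_pow _ hc1).trans ?_
    rw [pow_add]
    exact ((mul_dvd_mul_left _ hb).mul_left _).mul_left g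

/-- For `i ≥ 1` and `0 ≤ j ≤ n-1`, one has `[L_{ij}, L_{ij}] ⊆ L_{i,j+1}`, where
`L_{ij} = Σ_{k ≤ j} x₁^{i+1} k[x]∂_k + Σ_{k > j} x₁^i k[x]∂_k` (a derivation `D`
lies in `L_{ij}` iff `x₁^{i+1} ∣ D(x_k)` for `k ≤ j` and `x₁^i ∣ D(x_k)` for `k > j`). -/
theorem stmt11 (k : Type*) [Field k] [CharZero k] (n : ℕ) (hn : 0 < n)
    (i j : ℕ) (hi : 1 ≤ i) (hj : j ≤ n - 1)
    (D E : Derivation k (MvPolynomial (Fin n) k) (MvPolynomial (Fin n) k))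
    (hD : ∀ m : Fin n, x1 k hn ^ (if (m : ℕ) < j then i + 1 else i) ∣ D (X m))
    (hE : ∀ m : Fin n, x1 k hn ^ (if (m : ℕ) < j then i + 1 else i) ∣ E (X m)) :
    ∀ m : Fin n, x1 k hn ^ (if (m : ℕ) < j + 1 then i + 1 else i) ∣ ⁅D, E⁆ (X m) := by
  have hallD : ∀ p, x1 k hn ^ i ∣ D p :=
    dvd_D_all hn D i fun m => (pow_dvd_pow _ (by split <;> omega)).trans (hD m)
  have hallE : ∀ p, x1 k hn ^ i ∣ E p :=
    dvd_D_all hn E i fun m => (pow_dvd_pow _ (by split <;> omega)).trans (hE m)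
  intro m
  rw [Derivation.commutator_apply]
  by_cases h1 : (m : ℕ) < j
  · rw [if_pos (by omega : (m : ℕ) < j + 1)]
    apply dvd_sub
    · exact keylem hn D i i (i+1) (i+1) hallD (hallD _) (by omega) (by omega) (by omega)
        _ (by simpa [if_pos h1] using hE m)
    · exact keylem hn E i i (i+1) (i+1) hallE (hallE _) (by omega) (by omega) (by omega)
        _ (by simpa [if_pos h1] using hD m)
  · by_cases h2 : (m : ℕ) < j + 1
    · rw [if_pos h2]
      by_cases h3 : 0 < j
      · -- j ≥ 1, so x1^{i+1} ∣ D x1 and E x1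
        have h0 : ((⟨0, hn⟩ : Fin n) : ℕ) < j := h3
        have hbD : x1 k hn ^ (i+1) ∣ D (x1 k hn) := by
          simpa [x1, if_pos h0] using hD ⟨0, hn⟩
        have hbE : x1 k hn ^ (i+1) ∣ E (x1 k hn) := by
          simpa [x1, if_pos h0] using hE ⟨0, hn⟩
        apply dvd_sub
        · exact keylem hn D i (i+1) i (i+1) hallD hbD (by omega) (by omega) (by omega)
            _ (by simpa [if_neg h1] using hE m)
        · exact keylem hn E i (i+1) i (i+1) hallE hbE (by omega) (by omega) (by omega)
            _ (by simpa [if_neg h1] using hD m)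
      · -- j = 0, m = 0 : cancellation case
        have hm : X m = x1 k hn := by
          have : m = ⟨0, hn⟩ := Fin.ext ((by omega : (m : ℕ) = 0))
          rw [this, x1]
        obtain ⟨f, hf⟩ : x1 k hn ^ i ∣ D (X m) := by simpa [if_neg h1] using hD m
        obtain ⟨g, hg⟩ : x1 k hn ^ i ∣ E (X m) := by simpa [if_neg h1] using hE m
        rw [hm] at hf hg
        rw [hm, hg, hf, Derivation.leibniz, Derivation.leibniz, Derivation.leibniz_pow,
          Derivation.leibniz_pow, hf, hg]
        have key : (x1 k hn ^ i) • D g + g • i • x1 k hn ^ (i-1) • (x1 k hn ^ i * f)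
            - ((x1 k hn ^ i) • E f + f • i • x1 k hn ^ (i-1) • (x1 k hn ^ i * g))
            = x1 k hn ^ i * (D g - E f) := by
          simp only [smul_eq_mul, nsmul_eq_mul]
          ring
        rw [key]
        refine (pow_dvd_pow _ (by omega : i + 1 ≤ i + i)).trans ?_
        rw [pow_add]
        exact mul_dvd_mul_left _ (dvd_sub (hallD g) (hallE f))
    · rw [if_neg h2]
      apply dvd_sub
      · exact keylem hn D i i i i hallD (hallD _) (by omega) (by omega) (by omega)
          _ (by simpa [if_neg h1] using hE m)
      · exact keylem hn E i i i i hallE (hallE _) (by omega) (by omega) (by omega)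
          _ (by simpa [if_neg h1] using hD m)
end

section
/- Let f, g ∈ k[t] be nonconstant polynomials such that k(f) = k(g) as subfields of k(t). Then g = αf + β for some α, β ∈ k with α ≠ 0. -/
open Polynomial

lemma key_poly (k : Type*) [Field k] (f g : k[X])
    (hf : 1 ≤ f.natDegree) (hg : g ≠ 0)
    (hmem : algebraMap k[X] (RatFunc k) g ∈
      IntermediateField.adjoin k {algebraMap k[X] (RatFunc k) f}) :
    ∃ P : k[X], g = P.comp f := by
  obtain ⟨r, s, hx⟩ := (IntermediateField.mem_adjoin_simple_iff k _).1 hmem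
  rw [aeval_algebraMap_apply, aeval_algebraMap_apply] at hx
  have hinj : Function.Injective (algebraMap k[X] (RatFunc k)) :=
    IsFractionRing.injective _ _
  have hfC : ∀ p : k[X], f ≠ C (f.coeff 0) := by
    intro p hp
    have := natDegree_C (f.coeff 0) ▸ hp ▸ hf
    omega
  have hcompne : ∀ p : k[X], p ≠ 0 → p.comp f ≠ 0 := by
    intro p hp hc
    rcases comp_eq_zero_iff.1 hc with h1 | ⟨_, h2⟩
    · exact hp h1
    · exact hfC p h2
  have hs : aeval f s ≠ 0 := by
    intro h0
    rw [h0, map_zero, div_zero] at hx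
    exact hg (hinj (by simpa using hx))
  have hs0 : s ≠ 0 := fun h0 => hs (by simp [h0])
  have hsι : (algebraMap k[X] (RatFunc k)) (aeval f s) ≠ 0 :=
    (map_ne_zero_iff _ hinj).mpr hs
  have heq : g * aeval f s = aeval f r := by
    apply hinj
    rw [map_mul]
    rw [eq_div_iff hsι] at hx
    exact hx
  -- pass to coprime representatives
  letI : DecidableEq k[X] := Classical.decEq _
  letI := EuclideanDomain.gcdMonoid k[X]
  set d := GCDMonoid.gcd r s with hd
  have hdne : d ≠ 0 := gcd_ne_zero_of_right hs0
  have hr' : d * (r / d) = r := EuclideanDomain.mul_div_cancel' hdne (gcd_dvd_left r s)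
  have hs' : d * (s / d) = s := EuclideanDomain.mul_div_cancel' hdne (gcd_dvd_right r s)
  have hcop : IsCoprime (r / d) (s / d) := isCoprime_div_gcd_div_gcd hs0
  have hdf : (aeval f d) ≠ 0 := hcompne d hdne
  have heq2 : g * aeval f (s / d) = aeval f (r / d) := by
    have : aeval f d * (g * aeval f (s / d)) = aeval f d * aeval f (r / d) := by
      rw [← map_mul, hr', mul_left_comm, ← map_mul, hs', heq]
    exact mul_left_cancel₀ hdf this
  have hcopf : IsCoprime (aeval f (r / d)) (aeval f (s / d)) :=
    hcop.map (aeval f : k[X] →ₐ[k] k[X]).toRingHom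
  have hunit : IsUnit (aeval f (s / d)) :=
    hcopf.isUnit_of_dvd' ⟨g, by rw [mul_comm]; exact heq2.symm⟩ dvd_rfl
  obtain ⟨c, hc, hcs⟩ := Polynomial.isUnit_iff.1 hunit
  have hcne : c ≠ 0 := hc.ne_zero
  refine ⟨C c⁻¹ * (r / d), ?_⟩
  have h2 : g * C c = aeval f (r / d) := by rw [hcs]; exact heq2
  rw [← comp_eq_aeval] at h2
  rw [mul_comp, C_comp, ← h2, mul_comm g, ← mul_assoc, ← C_mul,
    inv_mul_cancel₀ hcne, C_1, one_mul]

/-- If `f, g ∈ k[t]` are nonconstant with `k(f) = k(g)` inside `k(t)`, then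
`g = αf + β` for some `α, β ∈ k` with `α ≠ 0`. -/
theorem stmt16 (k : Type*) [Field k] [CharZero k] (f g : k[X])
    (hf : 1 ≤ f.natDegree) (hg : 1 ≤ g.natDegree)
    (h : IntermediateField.adjoin k {algebraMap k[X] (RatFunc k) f} =
      IntermediateField.adjoin k {algebraMap k[X] (RatFunc k) g}) :
    ∃ a b : k, a ≠ 0 ∧ g = C a * f + C b := by
  have hg0 : g ≠ 0 := fun h0 => by simp [h0] at hg
  have hf0 : f ≠ 0 := fun h0 => by simp [h0] at hf
  have hgm : algebraMap k[X] (RatFunc k) g ∈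
      IntermediateField.adjoin k {algebraMap k[X] (RatFunc k) f} := by
    rw [h]; exact IntermediateField.mem_adjoin_simple_self k _
  have hfm : algebraMap k[X] (RatFunc k) f ∈
      IntermediateField.adjoin k {algebraMap k[X] (RatFunc k) g} := by
    rw [← h]; exact IntermediateField.mem_adjoin_simple_self k _
  obtain ⟨P, hP⟩ := key_poly k f g hf hg0 hgm
  obtain ⟨Q, hQ⟩ := key_poly k g f hg hf0 hfm
  have hfe : (Q.comp P).comp f = f := by rw [comp_assoc, ← hP, ← hQ]
  have hdeg : (Q.comp P).natDegree * f.natDegree = 1 * f.natDegree := by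
    rw [← natDegree_comp, hfe, one_mul]
  have h1 : Q.natDegree * P.natDegree = 1 := by
    rw [← natDegree_comp]
    exact Nat.eq_of_mul_eq_mul_right (by omega) hdeg
  have hP1 : P.natDegree = 1 := Nat.eq_one_of_mul_eq_one_left h1
  have hPne : P ≠ 0 := fun h0 => by simp [h0] at hP1
  refine ⟨P.coeff 1, P.coeff 0, ?_, ?_⟩
  · have : P.coeff 1 = P.leadingCoeff := by rw [leadingCoeff, hP1]
    rw [this]
    exact leadingCoeff_ne_zero.2 hPne
  · conv_lhs => rw [hP, eq_X_add_C_of_natDegree_le_one hP1.le]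
    simp [add_comp, mul_comp, C_comp, X_comp]
end
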